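/- arXiv:1909.08920 — 2 statements merged into one kernel-verified Lean document; each statement's English description precedes it below -/
import Mathlib

section
/- For every time step t ≤ m there exists a set S_t of exactly t − μ(a₁,t) items such that, for every ranking ≻ reported by the manipulator a₁, S_t is contained in the set of items picked during the first t steps of the allocation process under report ≻. -/
/-- One step of the sequential allocation process: an agent with ranking `rk`
(a bijection `Fin m ≃ Fin m`, lower rank = more preferred) greedily picks the
lowest-rank item among the remaining ones (the complement of the already
picked set `S`); if nothing is left, nothing happens. -/
def pickStep {m : ℕ} (rk : Fin m ≃ Fin m) (S : Finset (Fin m)) : Finset (Fin m) :=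
  S ∪ Sᶜ.filter fun i => ∀ j ∈ Sᶜ, rk i ≤ rk j

/-- `pickedSeq rpt π` : the set of items picked after running the sequential
allocation process along the (finite) picking sequence `π`, where agent `a`
reports the ranking `rpt a`.  The set picked after the first `t` steps is
`pickedSeq rpt (π.take t)`. -/
def pickedSeq {A : Type*} {m : ℕ} (rpt : A → Fin m ≃ Fin m) (π : List A) :
    Finset (Fin m) :=
  π.foldl (fun S a => pickStep (rpt a) S) ∅

/-!
Induction on the picking sequence, building the guaranteed set `Sₜ` step by step. A pick of
`a₁` adds nothing to it. At a pick of a truthful agent `a`, add the `a`-best item `i` outside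
`Sₜ`: under any report of `a₁` the items still available are outside `Sₜ`, so either `i` has
already been taken or it is the best available item for `a`, and `a` takes it now.
-/

section PickStep

variable {m : ℕ} (rk : Fin m ≃ Fin m)

lemma subset_pickStep (S : Finset (Fin m)) : S ⊆ pickStep rk S :=
  Finset.subset_union_left

lemma mem_pickStep_of_subset_of_forall_rank_le {T S : Finset (Fin m)} (hTS : T ⊆ S)
    {i : Fin m} (hmin : ∀ j ∉ T, rk i ≤ rk j) : i ∈ pickStep rk S := by
  by_cases hiS : i ∈ S
  · exact subset_pickStep rk S hiS
  · refine Finset.mem_union_right _ (Finset.mem_filter.mpr ⟨Finset.mem_compl.mpr hiS, ?_⟩)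
    intro j hj
    exact hmin j fun hjT => Finset.mem_compl.mp hj (hTS hjT)

end PickStep

lemma pickedSeq_append_singleton {A : Type*} {m : ℕ} (rpt : A → Fin m ≃ Fin m)
    (L : List A) (a : A) :
    pickedSeq rpt (L ++ [a]) = pickStep (rpt a) (pickedSeq rpt L) := by
  simp [pickedSeq, List.foldl_append]

lemma exists_card_eq_subset_pickedSeq_of_forall_ne {A : Type*} [DecidableEq A] {m : ℕ}
    (a₁ : A) (rk : A → Fin m ≃ Fin m) (L : List A) (hL : L.length ≤ m) :
    ∃ S : Finset (Fin m), S.card = L.length - L.count a₁ ∧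
      ∀ rpt : A → Fin m ≃ Fin m, (∀ a ≠ a₁, rpt a = rk a) → S ⊆ pickedSeq rpt L := by
  induction L using List.reverseRecOn with
  | nil => exact ⟨∅, rfl, fun _ _ => Finset.empty_subset _⟩
  | append_singleton L a ih =>
    rw [List.length_append, List.length_singleton] at hL
    obtain ⟨S, hcard, hsub⟩ := ih (by omega)
    have hcount : L.count a₁ ≤ L.length := List.count_le_length
    by_cases ha : a = a₁
    · subst ha
      refine ⟨S, ?_, fun rpt hrpt => ?_⟩
      · simp only [hcard, List.length_append, List.count_append, List.count_singleton_self,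
          List.length_singleton]
        omega
      · rw [pickedSeq_append_singleton]
        exact (hsub rpt hrpt).trans (subset_pickStep _ _)
    · have hcompl : Sᶜ.Nonempty := by
        rw [← Finset.card_pos, Finset.card_compl, Fintype.card_fin]
        omega
      obtain ⟨i, hi, hmin⟩ := Finset.exists_min_image Sᶜ (rk a) hcompl
      rw [Finset.mem_compl] at hi
      refine ⟨insert i S, ?_, fun rpt hrpt => ?_⟩
      · rw [Finset.card_insert_of_notMem hi, hcard, List.length_append, List.count_append,
          List.count_singleton, beq_false_of_ne ha]
        simp only [List.length_singleton, Bool.false_eq_true, if_false]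
        omega
      · rw [pickedSeq_append_singleton, hrpt a ha]
        refine Finset.insert_subset ?_ ((hsub rpt hrpt).trans (subset_pickStep _ _))
        exact mem_pickStep_of_subset_of_forall_rank_le _ (hsub rpt hrpt)
          fun j hj => hmin j (Finset.mem_compl.mpr hj)

/-- for every time step `t ≤ m` there is a set `St` of exactly
`t − μ(a₁,t)` items that is contained in the set of items picked during the
first `t` steps, whatever ranking `r` the manipulator `a₁` reports
(non-manipulators reporting their truthful rankings `rk`);
here `μ(a₁,t) = |{s ≤ t : π(s) = a₁}|` is the number of picks of `a₁` among the
first `t` steps. -/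
theorem statement6 {A : Type*} [DecidableEq A] {m : ℕ} (a₁ : A)
    (rk : A → Fin m ≃ Fin m) (π : List A) (hπ : π.length = m)
    (t : ℕ) (ht : t ≤ m) :
    ∃ St : Finset (Fin m), St.card = t - (π.take t).count a₁ ∧
      ∀ r : Fin m ≃ Fin m,
        St ⊆ pickedSeq (Function.update rk a₁ r) (π.take t) := by
  have hlen : (π.take t).length = t := by
    rw [List.length_take, hπ]
    omega
  obtain ⟨St, hcard, hsub⟩ :=
    exists_card_eq_subset_pickedSeq_of_forall_ne a₁ rk (π.take t) (by omega)
  exact ⟨St, by rw [hcard, hlen], fun r => hsub _ fun a ha => Function.update_of_ne ha r rk⟩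
end

section
/- If n ≥ 2, then |Δ| ≤ m · (2·rg^max)^{n−2}. -/
/-- Items are `Fin m`; a ranking is a bijection `Fin m ≃ Fin m`
(`rk i` is the rank of item `i`; lower rank = more preferred).
`IsBest rk S b` says that `b` is the item of `I ∖ S` with minimum rank,
i.e. `b = b(a, S)` for an agent with ranking `rk`. -/
def IsBest {m : ℕ} (rk : Fin m ≃ Fin m) (S : Finset (Fin m)) (b : Fin m) : Prop :=
  b ∉ S ∧ ∀ j ∉ S, rk b ≤ rk j

/-- `D rk i` : the set of items strictly preferred to `i` under the ranking `rk`. -/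
def D {m : ℕ} (rk : Fin m ≃ Fin m) (i : Fin m) : Finset (Fin m) :=
  Finset.univ.filter fun j => rk j < rk i

/-- `Δ` : the family of proper subsets `S ⊊ I` with `⋃_{a ≠ a₁} D(a, b(a,S)) = S`. -/
def Delta {A : Type*} {m : ℕ} (a₁ : A) (rk : A → Fin m ≃ Fin m) :
    Set (Finset (Fin m)) :=
  {S | S ⊂ Finset.univ ∧ ∀ b : A → Fin m, (∀ a, IsBest (rk a) S (b a)) →
    {j : Fin m | ∃ a, a ≠ a₁ ∧ j ∈ D (rk a) (b a)} = ↑S}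

/-- The ranks (as natural numbers) given to item `i` by the non-manipulators. -/
def nonManipRanks {A : Type*} [Fintype A] [DecidableEq A] {m : ℕ}
    (a₁ : A) (rk : A → Fin m ≃ Fin m) (i : Fin m) : Finset ℕ :=
  (Finset.univ.filter fun a => a ≠ a₁).image fun a => (rk a i : ℕ)

/-- The range of an item: `max_{a ≠ a₁} rk_a(i) − min_{a ≠ a₁} rk_a(i) + 1`. -/
def rg {A : Type*} [Fintype A] [DecidableEq A] {m : ℕ}
    (a₁ : A) (rk : A → Fin m ≃ Fin m) (i : Fin m) : ℕ :=
  WithBot.unbotD 0 (nonManipRanks a₁ rk i).max - WithTop.untopD 0 (nonManipRanks a₁ rk i).min + 1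

/-- `rg^max` : the maximum range of an item. -/
def rgMax {A : Type*} [Fintype A] [DecidableEq A] {m : ℕ}
    (a₁ : A) (rk : A → Fin m ≃ Fin m) : ℕ :=
  Finset.univ.sup fun i : Fin m => rg a₁ rk i

/-!
A set `S ∈ Δ` is determined by the best items `b(a, S)` of the non-manipulators. Fix a second
non-manipulator `a₂`. The item `b(a₂, S)` is one of `m` items, and for every other
non-manipulator `a` the rank `rk_a(b(a, S))` differs from `rk_{a₂}(b(a₂, S))` by less than
`rg^max` (compare both with the ranks of `b(a, S)` itself), so it takes fewer than `2 rg^max`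
values. This gives an injective code of `Δ` into `Fin m × (Fin (2 rg^max))^(n - 2)`.
-/

open Finset

section Best

variable {m : ℕ}

lemma exists_isBest (rk : Fin m ≃ Fin m) {S : Finset (Fin m)} (hS : S ⊂ univ) :
    ∃ b, IsBest rk S b := by
  obtain ⟨x, -, hx⟩ := exists_of_ssubset hS
  obtain ⟨b, hb, hmin⟩ := Sᶜ.exists_min_image rk ⟨x, mem_compl.mpr hx⟩
  exact ⟨b, mem_compl.mp hb, fun j hj => hmin j (mem_compl.mpr hj)⟩

noncomputable def best (rk : Fin m ≃ Fin m) {S : Finset (Fin m)} (hS : S ⊂ univ) : Fin m :=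
  (exists_isBest rk hS).choose

lemma best_isBest (rk : Fin m ≃ Fin m) {S : Finset (Fin m)} (hS : S ⊂ univ) :
    IsBest rk S (best rk hS) :=
  (exists_isBest rk hS).choose_spec

end Best

section Delta

variable {A : Type*} {m : ℕ} {a₁ : A} {rk : A → Fin m ≃ Fin m} {S S' : Finset (Fin m)}

lemma coe_eq_of_mem_Delta (hS : S ∈ Delta a₁ rk) :
    (S : Set (Fin m)) = {j | ∃ a, a ≠ a₁ ∧ j ∈ D (rk a) (best (rk a) hS.1)} :=
  (hS.2 _ fun a => best_isBest (rk a) hS.1).symm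

lemma eq_of_mem_Delta_of_best_eq (hS : S ∈ Delta a₁ rk) (hS' : S' ∈ Delta a₁ rk)
    (h : ∀ a, a ≠ a₁ → best (rk a) hS.1 = best (rk a) hS'.1) : S = S' := by
  apply coe_injective
  rw [coe_eq_of_mem_Delta hS, coe_eq_of_mem_Delta hS']
  ext j
  exact exists_congr fun a => and_congr_right fun ha => by rw [h a ha]

end Delta

section Range

variable {A : Type*} [Fintype A] [DecidableEq A] {m : ℕ} {a₁ : A} {rk : A → Fin m ≃ Fin m}

lemma rank_le_rank_add_rg {a a' : A} (ha : a ≠ a₁) (ha' : a' ≠ a₁) (i : Fin m) :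
    (rk a' i : ℕ) ≤ rk a i + (rg a₁ rk i - 1) := by
  have mem : ∀ {b}, b ≠ a₁ → (rk b i : ℕ) ∈ nonManipRanks a₁ rk i := fun hb =>
    mem_image_of_mem _ (mem_filter.mpr ⟨mem_univ _, hb⟩)
  have hmax := WithBot.le_unbotD (a := 0) (le_max (mem ha'))
  have hmin := WithTop.untopD_le (a := 0) (min_le (mem ha))
  unfold rg
  omega

lemma rg_le_rgMax (i : Fin m) : rg a₁ rk i ≤ rgMax a₁ rk :=
  le_sup (f := fun i => rg a₁ rk i) (mem_univ i)

lemma one_le_rgMax (i : Fin m) : 1 ≤ rgMax a₁ rk :=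
  (Nat.le_add_left 1 _).trans (rg_le_rgMax i)

lemma IsBest.rank_le_rank_add_rgMax {a a' : A} (ha : a ≠ a₁) (ha' : a' ≠ a₁)
    {S : Finset (Fin m)} {b b' : Fin m} (hb : IsBest (rk a) S b) (hb' : IsBest (rk a') S b') :
    (rk a' b' : ℕ) ≤ rk a b + (rgMax a₁ rk - 1) :=
  calc (rk a' b' : ℕ) ≤ rk a' b := hb'.2 b hb.1
    _ ≤ rk a b + (rg a₁ rk b - 1) := rank_le_rank_add_rg ha ha' b
    _ ≤ rk a b + (rgMax a₁ rk - 1) := by have := rg_le_rgMax (a₁ := a₁) (rk := rk) b; omega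

lemma IsBest.rank_add_sub_lt {a a' : A} (ha : a ≠ a₁) (ha' : a' ≠ a₁)
    {S : Finset (Fin m)} {b b' : Fin m} (hb : IsBest (rk a) S b) (hb' : IsBest (rk a') S b') :
    (rk a b : ℕ) + (rgMax a₁ rk - 1) - rk a' b' < 2 * rgMax a₁ rk := by
  have := hb'.rank_le_rank_add_rgMax ha' ha hb
  have := one_le_rgMax (a₁ := a₁) (rk := rk) b
  omega

end Range

section Code

variable {A : Type*} [Fintype A] [DecidableEq A] {m : ℕ} {a₁ a₂ : A} {rk : A → Fin m ≃ Fin m}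

noncomputable def deltaCode (ha₂ : a₂ ≠ a₁) (S : Delta a₁ rk) :
    Fin m × ({a // a ∉ ({a₁, a₂} : Finset A)} → Fin (2 * rgMax a₁ rk)) :=
  -- shifted by `rg^max - 1` so that the subtraction in `ℕ` never truncates
  (best (rk a₂) S.2.1, fun a =>
    ⟨rk a (best (rk a) S.2.1) + (rgMax a₁ rk - 1) - rk a₂ (best (rk a₂) S.2.1),
      (best_isBest _ _).rank_add_sub_lt (fun h => a.2 (by simp [h])) ha₂ (best_isBest _ _)⟩)

lemma deltaCode_injective (ha₂ : a₂ ≠ a₁) : Function.Injective (deltaCode (rk := rk) ha₂) := by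
  rintro ⟨S, hS⟩ ⟨S', hS'⟩ hcode
  simp only [deltaCode, Prod.mk.injEq, funext_iff, Fin.mk.injEq] at hcode
  obtain ⟨hbest₂, hoffset⟩ := hcode
  refine Subtype.ext (eq_of_mem_Delta_of_best_eq hS hS' fun a ha => ?_)
  by_cases h : a = a₂
  · exact h ▸ hbest₂
  have hoffset := hoffset ⟨a, by simp [ha, h]⟩
  dsimp only at hoffset
  have hle := (best_isBest (rk a) hS.1).rank_le_rank_add_rgMax ha ha₂ (best_isBest (rk a₂) hS.1)
  have hle' :=
    (best_isBest (rk a) hS'.1).rank_le_rank_add_rgMax ha ha₂ (best_isBest (rk a₂) hS'.1)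
  rw [hbest₂] at hoffset hle
  exact (rk a).injective (Fin.ext (by omega))

end Code

/-- if `n ≥ 2`, then `|Δ| ≤ m * (2 * rg^max) ^ (n − 2)`. -/
theorem statement8 {A : Type*} [Fintype A] [DecidableEq A] {m : ℕ}
    (a₁ : A) (rk : A → Fin m ≃ Fin m) (hn : 2 ≤ Fintype.card A) :
    (Delta a₁ rk).ncard ≤ m * (2 * rgMax a₁ rk) ^ (Fintype.card A - 2) := by
  obtain ⟨a₂, ha₂⟩ := Fintype.exists_ne_of_one_lt_card hn a₁
  calc (Delta a₁ rk).ncard = Nat.card (Delta a₁ rk) := (Nat.card_coe_set_eq _).symm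
    _ ≤ Nat.card (Fin m × ({a // a ∉ ({a₁, a₂} : Finset A)} → Fin (2 * rgMax a₁ rk))) :=
      Nat.card_le_card_of_injective _ (deltaCode_injective ha₂)
    _ = m * (2 * rgMax a₁ rk) ^ (Fintype.card A - 2) := by
      rw [Nat.card_eq_fintype_card, Fintype.card_prod, Fintype.card_fun, Fintype.card_fin,
        Fintype.card_fin, Fintype.card_subtype_compl, Fintype.card_coe, card_pair ha₂.symm]
end
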